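/- For all n ≥ 1, the length of the T-module I_{n-1}/(Iₙ : x₃^{q+m}) equals n. -/

import Mathlib

open MvPolynomial

/-- The monomial ideal `J = (x₂², x₂x₃^{q+m}, x₃^{q+m+1})` of `T = k[x₂,x₃]`
(here `X 0 = x₂`, `X 1 = x₃`). -/
noncomputable def Jideal (k : Type*) [Field k] (q m : ℕ) : Ideal (MvPolynomial (Fin 2) k) :=
  Ideal.span {X 0 ^ 2, X 0 * X 1 ^ (q+m), X 1 ^ (q+m+1)}

/-- The monomial ideal `F = (x₃^{2(q+m)+1})` of `T`. -/
noncomputable def Fideal (k : Type*) [Field k] (q m : ℕ) : Ideal (MvPolynomial (Fin 2) k) :=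
  Ideal.span {X 1 ^ (2*(q+m)+1)}

/-- `Iₙ = Σ_{n₁+2n₂=n} F^{n₂} J^{n₁}`. -/
noncomputable def Iideal (k : Type*) [Field k] (q m n : ℕ) : Ideal (MvPolynomial (Fin 2) k) :=
  ⨆ (c : ℕ × ℕ) (_ : c.1 + 2 * c.2 = n), (Fideal k q m) ^ c.2 * (Jideal k q m) ^ c.1

/-- The length of a module, as the Krull dimension of its lattice of submodules. -/
noncomputable def moduleLength (R M : Type*) [Ring R] [AddCommGroup M] [Module R M] :
    WithBot ℕ∞ :=
  Order.krullDim (Submodule R M)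

/-!
With `s = q + m`, each `Iₙ` is the monomial ideal generated by the monomials
`x₂^{2a+b} x₃^{sb+(s+1)c+(2s+1)j}` with `a + b + c + 2j = n`, and these generating sets are
additive in `n`. As `x₂x₃^s` and `x₃^{s+1}` are generators for `n = 1`, the ideal `(x₂, x₃)`
annihilates `I_N / (I_{N+1} : x₃^s)`, so its length is its dimension over `k`. A generator of
`I_N` with `c ≥ 1` or `b ≥ 2` lies in the colon ideal; the `N + 1` generators with `c = 0`,
`b ≤ 1` remain, and their classes are linearly independent because no generator of `I_{N+1}`
divides `x₃^s` times one of them.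
-/

open scoped Pointwise

theorem Module.length_eq_of_smul_eq {R A M : Type*} [CommRing R] [Ring A] [Algebra R A]
    [AddCommGroup M] [Module A M] [Module R M] [IsScalarTower R A M] (φ : A → R)
    (hφ : ∀ (a : A) (x : M), a • x = φ a • x) :
    Module.length A M = Module.length R M := by
  let e : Submodule A M ≃o Submodule R M :=
    { toFun := Submodule.restrictScalars R
      invFun := fun W =>
        { carrier := W
          add_mem' := W.add_mem
          zero_mem' := W.zero_mem
          smul_mem' := fun a x hx => by simpa [hφ a x] using W.smul_mem (φ a) hx }
      left_inv := fun _ => rfl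
      right_inv := fun _ => rfl
      map_rel_iff' := Iff.rfl }
  apply WithBot.coe_injective
  rw [Module.coe_length, Module.coe_length, Order.krullDim_eq_of_orderIso e]

namespace MvPolynomial

variable {σ R : Type*} [CommSemiring R]

theorem span_monomial_mul_span_monomial (A B : Set (σ →₀ ℕ)) :
    Ideal.span ((monomial · (1 : R)) '' A) * Ideal.span ((monomial · (1 : R)) '' B) =
      Ideal.span ((monomial · (1 : R)) '' (A + B)) := by
  rw [Ideal.span_mul_span', ← Set.image2_mul, ← Set.image2_add, Set.image_image2]
  simp only [Set.image2_image_left, Set.image2_image_right, monomial_mul, mul_one]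

theorem eq_zero_of_sum_monomial_mem_span {ι : Type*} [Fintype ι] {d : ι → σ →₀ ℕ}
    (hd : Function.Injective d) {S : Set (σ →₀ ℕ)} (hS : ∀ i, ∀ e ∈ S, ¬ e ≤ d i) (c : ι → R)
    (h : ∑ i, monomial (d i) (c i) ∈ Ideal.span ((monomial · (1 : R)) '' S)) : c = 0 := by
  classical
  funext i
  by_contra hci
  have hcoeff : coeff (d i) (∑ j, monomial (d j) (c j)) = c i := by
    rw [coeff_sum, Finset.sum_eq_single i (fun j _ hji => by simp [hd.ne hji])
      (by simp), coeff_monomial, if_pos rfl]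
  obtain ⟨e, he, hle⟩ := mem_ideal_span_monomial_image.mp h (d i) (by simpa [hcoeff] using hci)
  exact hS i e he hle

theorem sub_C_constantCoeff_mem_idealOfVars {A : Type*} [CommRing A] (p : MvPolynomial σ A) :
    p - C (constantCoeff p) ∈ idealOfVars σ A := by
  rw [← pow_one (idealOfVars σ A), mem_pow_idealOfVars_iff]
  intro d hd
  rw [Nat.one_le_iff_ne_zero]
  rintro hd0
  rw [Finsupp.degree_eq_zero_iff] at hd0
  subst hd0
  simp [coeff_sub, constantCoeff_eq] at hd

end MvPolynomial

namespace Iideal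

noncomputable def pairExp (u v : ℕ) : Fin 2 →₀ ℕ := Finsupp.single 0 u + Finsupp.single 1 v

lemma pairExp_add (u v u' v' : ℕ) : pairExp u v + pairExp u' v' = pairExp (u + u') (v + v') := by
  simp only [pairExp, Finsupp.single_add]
  abel

lemma pairExp_le_pairExp {u v u' v' : ℕ} : pairExp u v ≤ pairExp u' v' ↔ u ≤ u' ∧ v ≤ v' := by
  simp [Finsupp.le_def, Fin.forall_fin_two, pairExp]

lemma pairExp_inj {u v u' v' : ℕ} : pairExp u v = pairExp u' v' ↔ u = u' ∧ v = v' := by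
  refine ⟨fun h => ?_, fun ⟨hu, hv⟩ => hu ▸ hv ▸ rfl⟩
  simpa [pairExp] using And.intro (DFunLike.congr_fun h 0) (DFunLike.congr_fun h 1)

/-- The exponent of `(x₂²)^a (x₂x₃^s)^b (x₃^{s+1})^c (x₃^{2s+1})^j`, a generator of `F^j J^{a+b+c}`
when `s = q + m`. -/
noncomputable def genExp (s a b c j : ℕ) : Fin 2 →₀ ℕ :=
  pairExp (2 * a + b) (s * b + (s + 1) * c + (2 * s + 1) * j)

def genExps (s n : ℕ) : Set (Fin 2 →₀ ℕ) :=
  {d | ∃ a b c j, a + b + c + 2 * j = n ∧ genExp s a b c j = d}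

noncomputable def genIdeal (R : Type*) [CommSemiring R] (s n : ℕ) :
    Ideal (MvPolynomial (Fin 2) R) :=
  Ideal.span ((monomial · (1 : R)) '' genExps s n)

lemma add_mem_genExps {s n n' : ℕ} {d d' : Fin 2 →₀ ℕ} (hd : d ∈ genExps s n)
    (hd' : d' ∈ genExps s n') : d + d' ∈ genExps s (n + n') := by
  obtain ⟨a, b, c, j, rfl, rfl⟩ := hd
  obtain ⟨a', b', c', j', rfl, rfl⟩ := hd'
  refine ⟨a + a', b + b', c + c', j + j', by ring, ?_⟩
  rw [genExp, genExp, genExp, pairExp_add]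
  congr 1 <;> ring

/-- The exponents of the monomials `x₂^{2(N-r)+ρ} x₃^{sρ+(2s+1)i}`, `r = 2i + ρ ≤ N`, `ρ ≤ 1`, whose
classes form a `k`-basis of `I_N / (I_{N+1} : x₃^s)`. -/
noncomputable def basisExp (s N r : ℕ) : Fin 2 →₀ ℕ := genExp s (N - r) (r % 2) 0 (r / 2)

lemma basisExp_mem_genExps {s N r : ℕ} (hr : r ≤ N) : basisExp s N r ∈ genExps s N :=
  ⟨N - r, r % 2, 0, r / 2, by omega, rfl⟩

lemma basisExp_injOn (s N : ℕ) : Set.InjOn (basisExp s N) (Set.Iic N) := by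
  intro r hr r' hr' h
  have := (pairExp_inj.mp h).1
  simp only [Set.mem_Iic] at hr hr'
  omega

lemma exists_genExps_le_or_eq_basisExp {s N : ℕ} (hs : 1 ≤ s) {d : Fin 2 →₀ ℕ}
    (hd : d ∈ genExps s N) :
    (∃ e ∈ genExps s (N + 1), e ≤ pairExp 0 s + d) ∨ ∃ r : Fin (N + 1), d = basisExp s N r := by
  obtain ⟨a, b, c, j, rfl, rfl⟩ := hd
  cases c with
  | succ c =>
    refine Or.inl ⟨genExp s a b c (j + 1), ⟨_, _, _, _, by omega, rfl⟩, ?_⟩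
    rw [genExp, genExp, pairExp_add, pairExp_le_pairExp]
    constructor <;> nlinarith
  | zero =>
    rcases Nat.lt_or_ge b 2 with hb | hb
    · refine Or.inr ⟨⟨b + 2 * j, by omega⟩, ?_⟩
      have hmod : (b + 2 * j) % 2 = b := by omega
      have hdiv : (b + 2 * j) / 2 = j := by omega
      simp only [basisExp, genExp, hmod, hdiv]
      congr 1
      omega
    · obtain ⟨b, rfl⟩ := Nat.exists_eq_add_of_le' hb
      refine Or.inl ⟨genExp s (a + 1) b 0 (j + 1), ⟨_, _, _, _, by omega, rfl⟩, ?_⟩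
      rw [genExp, genExp, pairExp_add, pairExp_le_pairExp]
      constructor <;> nlinarith

lemma not_genExps_le_basisExp {s N r : ℕ} (hs : 1 ≤ s) (hr : r ≤ N) :
    ∀ e ∈ genExps s (N + 1), ¬ e ≤ pairExp 0 s + basisExp s N r := by
  rintro _ ⟨a, b, c, j, hsum, rfl⟩ hle
  rw [basisExp, genExp, genExp, pairExp_add, pairExp_le_pairExp] at hle
  obtain ⟨hx, hy⟩ := hle
  obtain ⟨i, ρ, rfl, hρ⟩ : ∃ i ρ, r = 2 * i + ρ ∧ ρ ≤ 1 := ⟨r / 2, r % 2, by omega, by omega⟩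
  rw [show (2 * i + ρ) % 2 = ρ by omega] at hx hy
  rw [show (2 * i + ρ) / 2 = i by omega] at hy
  obtain ⟨w, rfl⟩ : ∃ w, i = j + w := ⟨i - j, by
    by_contra! h
    nlinarith [Nat.mul_le_mul_left (2 * s + 1) (show i + 1 ≤ j by omega)]⟩
  -- The `x₂`-degree bound forces at least `2w + 2` factors `x₃^{s+1}`; the `x₃`-degree cannot
  -- afford them.
  have hx' : 4 * w + ρ + 2 ≤ b + 2 * c := by omega
  have hy' : s * b + (s + 1) * c ≤ (2 * s + 1) * w + s * ρ + s := by nlinarith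
  have hc : 2 * w + 2 ≤ c := by
    by_contra! h
    nlinarith [Nat.mul_le_mul_left s hx', Nat.sub_add_cancel hs,
      Nat.mul_le_mul_left (s - 1) (show c ≤ 2 * w + 1 by omega)]
  nlinarith [Nat.mul_le_mul_left (s + 1) hc, Nat.mul_le_mul_left s hρ]

section CommSemiring

variable {R : Type*} [CommSemiring R]

lemma monomial_pairExp (u v : ℕ) :
    monomial (pairExp u v) (1 : R) = X 0 ^ u * X 1 ^ v := by
  rw [X_pow_eq_monomial, X_pow_eq_monomial, monomial_mul, one_mul, pairExp]

lemma X_one_pow_mul_monomial (s : ℕ) (d : Fin 2 →₀ ℕ) (a : R) :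
    X 1 ^ s * monomial d a = monomial (pairExp 0 s + d) a := by
  rw [← one_mul (X 1 ^ s), ← pow_zero (X 0), ← monomial_pairExp, monomial_mul, one_mul]

lemma monomial_genExp_mem (s a b c j : ℕ) :
    monomial (genExp s a b c j) (1 : R) ∈ genIdeal R s (a + b + c + 2 * j) :=
  Ideal.subset_span ⟨_, ⟨a, b, c, j, rfl, rfl⟩, rfl⟩

lemma genIdeal_mul_le (s n n' : ℕ) :
    genIdeal R s n * genIdeal R s n' ≤ genIdeal R s (n + n') := by
  rw [genIdeal, genIdeal, span_monomial_mul_span_monomial]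
  refine Ideal.span_mono (Set.image_mono ?_)
  rintro _ ⟨d, hd, d', hd', rfl⟩
  exact add_mem_genExps hd hd'

lemma pow_le_genIdeal {s d : ℕ} {A : Ideal (MvPolynomial (Fin 2) R)} (hA : A ≤ genIdeal R s d) :
    ∀ t, A ^ t ≤ genIdeal R s (d * t)
  | 0 => by
    rw [pow_zero, Ideal.one_eq_top, top_le_iff, Ideal.eq_top_iff_one]
    simpa [genExp, pairExp] using monomial_genExp_mem (R := R) s 0 0 0 0
  | t + 1 => by
    rw [pow_succ, mul_add_one]
    exact (Ideal.mul_mono (pow_le_genIdeal hA t) hA).trans (genIdeal_mul_le s _ _)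

end CommSemiring

variable {k : Type*} [Field k] {q m : ℕ}

lemma Jideal_le_genIdeal : Jideal k q m ≤ genIdeal k (q + m) 1 := by
  rw [Jideal, Ideal.span_le]
  rintro _ (rfl | rfl | rfl)
  · simpa [genExp, monomial_pairExp] using monomial_genExp_mem (R := k) (q + m) 1 0 0 0
  · simpa [genExp, monomial_pairExp] using monomial_genExp_mem (R := k) (q + m) 0 1 0 0
  · simpa [genExp, monomial_pairExp] using monomial_genExp_mem (R := k) (q + m) 0 0 1 0

lemma Fideal_le_genIdeal : Fideal k q m ≤ genIdeal k (q + m) 2 := by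
  rw [Fideal, Ideal.span_le, Set.singleton_subset_iff]
  simpa [genExp, monomial_pairExp] using monomial_genExp_mem (R := k) (q + m) 0 0 0 1

theorem eq_genIdeal (n : ℕ) : Iideal k q m n = genIdeal k (q + m) n := by
  apply le_antisymm
  · refine iSup₂_le fun c (h : c.1 + 2 * c.2 = n) => ?_
    calc Fideal k q m ^ c.2 * Jideal k q m ^ c.1
        ≤ genIdeal k (q + m) (2 * c.2) * genIdeal k (q + m) (1 * c.1) :=
          Ideal.mul_mono (pow_le_genIdeal Fideal_le_genIdeal _)
            (pow_le_genIdeal Jideal_le_genIdeal _)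
      _ ≤ genIdeal k (q + m) n := by
          convert genIdeal_mul_le (q + m) _ _ using 2
          omega
  · rw [genIdeal, Ideal.span_le]
    rintro _ ⟨_, ⟨a, b, c, j, rfl, rfl⟩, rfl⟩
    have hmem : monomial (genExp (q + m) a b c j) (1 : k) =
        (X 1 ^ (2 * (q + m) + 1)) ^ j *
          ((X 0 ^ 2) ^ a * (X 0 * X 1 ^ (q + m)) ^ b * (X 1 ^ (q + m + 1)) ^ c) := by
      rw [genExp, monomial_pairExp]
      ring
    have hJ : ∀ x ∈ ({X 0 ^ 2, X 0 * X 1 ^ (q + m), X 1 ^ (q + m + 1)} : Set _), ∀ t,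
        x ^ t ∈ Jideal k q m ^ t :=
      fun x hx t => Ideal.pow_mem_pow (by rw [Jideal]; exact Ideal.subset_span hx) t
    have hFJ : monomial (genExp (q + m) a b c j) (1 : k) ∈
        Fideal k q m ^ j * Jideal k q m ^ (a + b + c) := by
      rw [hmem, pow_add, pow_add]
      exact Ideal.mul_mem_mul (Ideal.pow_mem_pow (Ideal.mem_span_singleton_self _) j)
        (Ideal.mul_mem_mul (Ideal.mul_mem_mul (hJ _ (by simp) a) (hJ _ (by simp) b))
          (hJ _ (by simp) c))
    exact le_iSup₂ (f := fun (p : ℕ × ℕ) (_ : p.1 + 2 * p.2 = a + b + c + 2 * j) =>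
      Fideal k q m ^ p.2 * Jideal k q m ^ p.1) (a + b + c, j) rfl hFJ

variable (k q m) in
noncomputable abbrev colonIdeal (n : ℕ) : Ideal (MvPolynomial (Fin 2) k) :=
  (Iideal k q m n).colon (Ideal.span {(X 1 : MvPolynomial (Fin 2) k) ^ (q + m)})

variable (k q m) in
/-- `I_N / (I_{N+1} : x₃^{q+m})`, the quotient of `I_N` by its intersection with the colon ideal. -/
abbrev ColonQuotient (N : ℕ) : Type _ :=
  ↥(Iideal k q m N) ⧸ Submodule.comap (Iideal k q m N).subtype (colonIdeal k q m (N + 1))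

lemma mem_colonIdeal {n : ℕ} {f : MvPolynomial (Fin 2) k} :
    f ∈ colonIdeal k q m n ↔ X 1 ^ (q + m) * f ∈ Iideal k q m n := by
  rw [Ideal.mem_colon_span_singleton, mul_comm]

lemma mul_mem_colonIdeal {N : ℕ} {p f : MvPolynomial (Fin 2) k} (hp : p ∈ idealOfVars (Fin 2) k)
    (hf : f ∈ Iideal k q m N) : p * f ∈ colonIdeal k q m (N + 1) := by
  have hvars : idealOfVars (Fin 2) k ≤
      (genIdeal k (q + m) 1).colon
        (Ideal.span {X 1 ^ (q + m)} : Ideal (MvPolynomial (Fin 2) k)) := by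
    rw [idealOfVars, Ideal.span_le, Set.range_subset_iff]
    intro i
    rw [SetLike.mem_coe, Ideal.mem_colon_span_singleton]
    fin_cases i
    · simpa [genExp, monomial_pairExp] using monomial_genExp_mem (R := k) (q + m) 0 1 0 0
    · simpa [genExp, monomial_pairExp, pow_succ'] using
        monomial_genExp_mem (R := k) (q + m) 0 0 1 0
  rw [mem_colonIdeal, eq_genIdeal]
  rw [eq_genIdeal] at hf
  have := Ideal.mul_mem_mul hf (Ideal.mem_colon_span_singleton.mp (hvars hp))
  convert genIdeal_mul_le _ _ _ this using 1
  ring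

lemma monomial_mem_colonIdeal {N : ℕ} {d e : Fin 2 →₀ ℕ} (he : e ∈ genExps (q + m) (N + 1))
    (hle : e ≤ pairExp 0 (q + m) + d) : monomial d (1 : k) ∈ colonIdeal k q m (N + 1) := by
  classical
  rw [mem_colonIdeal, eq_genIdeal, X_one_pow_mul_monomial, genIdeal, mem_ideal_span_monomial_image]
  intro d' hd'
  rw [support_monomial, if_neg one_ne_zero, Finset.mem_singleton] at hd'
  exact ⟨e, he, hd' ▸ hle⟩

lemma smul_eq_constantCoeff_smul {N : ℕ} (p : MvPolynomial (Fin 2) k)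
    (x : ColonQuotient k q m N) : p • x = constantCoeff p • x := by
  induction x using Submodule.Quotient.induction_on with
  | H f =>
    rw [← sub_eq_zero, ← algebraMap_smul (MvPolynomial (Fin 2) k) (constantCoeff p), ← sub_smul,
      ← Submodule.Quotient.mk_smul, Submodule.Quotient.mk_eq_zero, Submodule.mem_comap]
    exact mul_mem_colonIdeal (sub_C_constantCoeff_mem_idealOfVars p) f.2

variable (k q m) in
noncomputable def basisVec (N : ℕ) (r : Fin (N + 1)) : ColonQuotient k q m N :=
  Submodule.Quotient.mk ⟨monomial (basisExp (q + m) N r) 1, by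
    rw [eq_genIdeal]
    exact Ideal.subset_span ⟨_, basisExp_mem_genExps r.is_le, rfl⟩⟩

lemma linearIndependent_basisVec (hs : 1 ≤ q + m) (N : ℕ) :
    LinearIndependent k (basisVec k q m N) := by
  rw [Fintype.linearIndependent_iff]
  intro c hc
  simp_rw [basisVec, ← Submodule.Quotient.mk_smul, ← Submodule.mkQ_apply, ← map_sum,
    Submodule.mkQ_apply, Submodule.Quotient.mk_eq_zero, Submodule.mem_comap, map_sum] at hc
  simp only [Submodule.coe_subtype, Submodule.coe_smul_of_tower, mem_colonIdeal, Finset.mul_sum,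
    smul_monomial, smul_eq_mul, mul_one, X_one_pow_mul_monomial, eq_genIdeal] at hc
  refine congrFun (eq_zero_of_sum_monomial_mem_span (fun r r' h => ?_)
    (fun r => not_genExps_le_basisExp hs r.is_le) c hc)
  exact Fin.ext (basisExp_injOn _ _ r.is_le r'.is_le (add_left_cancel h))

lemma span_basisVec (hs : 1 ≤ q + m) (N : ℕ) :
    Submodule.span k (Set.range (basisVec k q m N)) = ⊤ := by
  rw [eq_top_iff]
  rintro x -
  obtain ⟨⟨f, hf⟩, rfl⟩ := Submodule.Quotient.mk_surjective _ x
  have hf' := hf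
  rw [eq_genIdeal] at hf'
  induction hf' using Submodule.span_induction with
  | mem g hg =>
    obtain ⟨d, hd, rfl⟩ := hg
    rcases exists_genExps_le_or_eq_basisExp hs hd with ⟨e, he, hle⟩ | ⟨r, rfl⟩
    · convert Submodule.zero_mem _
      exact (Submodule.Quotient.mk_eq_zero _).mpr (monomial_mem_colonIdeal he hle)
    · exact Submodule.subset_span ⟨r, rfl⟩
  | zero => exact zero_mem _
  | add g g' _ _ hg hg' =>
    exact add_mem (hg (by rwa [eq_genIdeal])) (hg' (by rwa [eq_genIdeal]))
  | smul p g _ hg =>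
    have hgI : g ∈ Iideal k q m N := by rwa [eq_genIdeal]
    rw [show (⟨p • g, hf⟩ : Iideal k q m N) = p • ⟨g, hgI⟩ from rfl, Submodule.Quotient.mk_smul,
      smul_eq_constantCoeff_smul]
    exact Submodule.smul_mem _ _ (hg hgI)

theorem length_colonQuotient (hs : 1 ≤ q + m) (N : ℕ) :
    Module.length k (ColonQuotient k q m N) = N + 1 := by
  let b := Module.Basis.mk (linearIndependent_basisVec (k := k) hs N) (span_basisVec hs N).ge
  have := Module.Finite.of_basis b
  rw [Module.length_eq_finrank, Module.finrank_eq_card_basis b, Fintype.card_fin]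
  norm_cast

end Iideal

theorem statement6_general (k : Type*) [Field k] (q m : ℕ) (hq : 1 ≤ q) :
    ∀ n : ℕ, 1 ≤ n →
      moduleLength (MvPolynomial (Fin 2) k)
          ((Iideal k q m (n-1)) ⧸
            (Submodule.comap (Iideal k q m (n-1)).subtype
              (Submodule.colon (Iideal k q m n)
                (Ideal.span {(X 1 : MvPolynomial (Fin 2) k) ^ (q+m)}))))
        = (n : WithBot ℕ∞) := by
  intro n hn
  obtain ⟨N, rfl⟩ := Nat.exists_eq_add_of_le' hn
  rw [Nat.add_sub_cancel, moduleLength, ← Module.coe_length,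
    Module.length_eq_of_smul_eq constantCoeff Iideal.smul_eq_constantCoeff_smul,
    Iideal.length_colonQuotient (by omega)]
  norm_cast

/-- For all `n ≥ 1`, `ℓ_T( I_{n-1} / (Iₙ : x₃^{q+m}) ) = n`. -/
theorem statement6 (k : Type*) [Field k] (q m : ℕ) (hq : 1 ≤ q) (hm : 1 ≤ m) :
    ∀ n : ℕ, 1 ≤ n →
      moduleLength (MvPolynomial (Fin 2) k)
          ((Iideal k q m (n-1)) ⧸
            (Submodule.comap (Iideal k q m (n-1)).subtype
              (Submodule.colon (Iideal k q m n)
                (Ideal.span {(X 1 : MvPolynomial (Fin 2) k) ^ (q+m)}))))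
        = (n : WithBot ℕ∞) :=
  statement6_general k q m hq
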